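/- arXiv:2206.02642 — 6 statements merged into one kernel-verified Lean document; each statement's English description precedes it below -/
import Mathlib

section
/- Let N ≥ 1, γ ∈ (0, π/2], let a ∈ ℝ^{N×N} be symmetric with nonnegative entries, and let θ ∈ ℝ^N satisfy |θ_i − θ_j| ≤ γ for all i, j. Define H(θ, a) ∈ ℝ^{N×N} by H_{ij} = −a_{ij}·cos(θ_j − θ_i) for i ≠ j and H_{ii} = ∑_{k≠i} a_{ik}·cos(θ_k − θ_i). Then for every v ∈ ℝ^N, ∑_{i,j=1}^N v_i·H_{ij}·v_j ≥ (cos γ / 2)·∑_{i,j=1}^N a_{ij}·(v_i − v_j)² ≥ 0; in particular H(θ, a) is positive semidefinite. -/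
open Real Finset

/-- In the phase-cohesive set Δ(γ) with γ ≤ π/2, the Hessian H(θ,a) of the
Kuramoto energy satisfies a spectral-gap type lower bound on its quadratic
form; in particular it is positive semidefinite. -/
theorem kuramoto_hessian_psd_on_cohesive
    (N : ℕ) (hN : 1 ≤ N)
    (γ : ℝ) (hγ0 : 0 < γ) (hγ : γ ≤ Real.pi / 2)
    (a : Fin N → Fin N → ℝ)
    (hsym : ∀ i j : Fin N, a i j = a j i)
    (ha : ∀ i j : Fin N, 0 ≤ a i j)
    (θ : Fin N → ℝ) (hθ : ∀ i j : Fin N, |θ i - θ j| ≤ γ)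
    (H : Fin N → Fin N → ℝ)
    (hHoff : ∀ i j : Fin N, i ≠ j → H i j = -(a i j * Real.cos (θ j - θ i)))
    (hHdiag : ∀ i : Fin N,
      H i i = ∑ k ∈ Finset.univ.erase i, a i k * Real.cos (θ k - θ i)) :
    ∀ v : Fin N → ℝ,
      (Real.cos γ / 2) * ∑ i : Fin N, ∑ j : Fin N, a i j * (v i - v j) ^ 2
          ≤ ∑ i : Fin N, ∑ j : Fin N, v i * H i j * v j
      ∧ 0 ≤ (Real.cos γ / 2) * ∑ i : Fin N, ∑ j : Fin N, a i j * (v i - v j) ^ 2 := by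
  intro v
  have hπ := Real.pi_pos
  have hcosγ : 0 ≤ Real.cos γ :=
    Real.cos_nonneg_of_mem_Icc ⟨by linarith, hγ⟩
  have hc : ∀ i j : Fin N, Real.cos γ ≤ Real.cos (θ j - θ i) := by
    intro i j
    rw [← Real.cos_abs (θ j - θ i)]
    exact Real.cos_le_cos_of_nonneg_of_le_pi (abs_nonneg _) (by linarith) (hθ j i)
  have hTnn : 0 ≤ ∑ i : Fin N, ∑ j : Fin N, a i j * (v i - v j) ^ 2 :=
    Finset.sum_nonneg fun i _ => Finset.sum_nonneg fun j _ =>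
      mul_nonneg (ha i j) (sq_nonneg _)
  -- Step 1: rewrite the quadratic form
  have h1 : ∑ i : Fin N, ∑ j : Fin N, v i * H i j * v j
      = ∑ i : Fin N, ∑ j : Fin N,
          a i j * Real.cos (θ j - θ i) * (v i ^ 2 - v i * v j) := by
    refine Finset.sum_congr rfl fun i _ => ?_
    rw [← Finset.sum_erase (f := fun j => a i j * Real.cos (θ j - θ i) * (v i ^ 2 - v i * v j))
        (Finset.univ) (a := i) (by ring),
      ← Finset.sum_erase_add Finset.univ (fun j => v i * H i j * v j)
        (Finset.mem_univ i), hHdiag i]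
    have e1 : v i * (∑ k ∈ Finset.univ.erase i, a i k * Real.cos (θ k - θ i)) * v i
        = ∑ k ∈ Finset.univ.erase i, a i k * Real.cos (θ k - θ i) * v i ^ 2 := by
      rw [mul_comm (v i), mul_assoc, Finset.sum_mul]
      exact Finset.sum_congr rfl fun k _ => by ring
    have e2 : ∑ j ∈ Finset.univ.erase i, v i * H i j * v j
        = ∑ j ∈ Finset.univ.erase i,
            -(a i j * Real.cos (θ j - θ i) * (v i * v j)) :=
      Finset.sum_congr rfl fun j hj => by
        rw [hHoff i j (Ne.symm (Finset.ne_of_mem_erase hj))]; ring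
    rw [e1, e2, ← Finset.sum_add_distrib]
    exact Finset.sum_congr rfl fun j _ => by ring
  -- Step 2: the symmetrized version
  have h2 : ∑ i : Fin N, ∑ j : Fin N, v i * H i j * v j
      = ∑ i : Fin N, ∑ j : Fin N,
          a i j * Real.cos (θ j - θ i) * (v j ^ 2 - v i * v j) := by
    rw [h1, Finset.sum_comm]
    exact Finset.sum_congr rfl fun i _ => Finset.sum_congr rfl fun j _ => by
      rw [hsym j i, ← neg_sub (θ j) (θ i), Real.cos_neg]; ring
  -- Step 3: combine
  have h3 : (∑ i : Fin N, ∑ j : Fin N,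
          a i j * Real.cos (θ j - θ i) * (v i ^ 2 - v i * v j))
      + (∑ i : Fin N, ∑ j : Fin N,
          a i j * Real.cos (θ j - θ i) * (v j ^ 2 - v i * v j))
      = ∑ i : Fin N, ∑ j : Fin N,
          a i j * Real.cos (θ j - θ i) * (v i - v j) ^ 2 := by
    rw [← Finset.sum_add_distrib]
    refine Finset.sum_congr rfl fun i _ => ?_
    rw [← Finset.sum_add_distrib]
    exact Finset.sum_congr rfl fun j _ => by ring
  -- Step 4: termwise bound
  have h4 : Real.cos γ * ∑ i : Fin N, ∑ j : Fin N, a i j * (v i - v j) ^ 2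
      ≤ ∑ i : Fin N, ∑ j : Fin N,
          a i j * Real.cos (θ j - θ i) * (v i - v j) ^ 2 := by
    rw [Finset.mul_sum]
    refine Finset.sum_le_sum fun i _ => ?_
    rw [Finset.mul_sum]
    refine Finset.sum_le_sum fun j _ => ?_
    have hX : 0 ≤ a i j * (v i - v j) ^ 2 := mul_nonneg (ha i j) (sq_nonneg _)
    calc Real.cos γ * (a i j * (v i - v j) ^ 2)
        ≤ Real.cos (θ j - θ i) * (a i j * (v i - v j) ^ 2) :=
          mul_le_mul_of_nonneg_right (hc i j) hX
      _ = a i j * Real.cos (θ j - θ i) * (v i - v j) ^ 2 := by ring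
  constructor
  · linarith [h1, h2, h3, h4]
  · exact mul_nonneg (by linarith) hTnn
end

section
/- Let N ≥ 1, γ ∈ (0, π/2], let a ∈ ℝ^{N×N} be symmetric with nonnegative entries, and let θ ∈ ℝ^N satisfy |θ_i − θ_j| ≤ γ for all i, j. Then ∑_{i=1}^N θ_i·∑_{j=1}^N a_{ij}·sin(θ_i − θ_j) ≥ (cos γ / 2)·∑_{i,j=1}^N a_{ij}·(θ_i − θ_j)². -/
open Real

lemma xsinx_lower {γ x : ℝ} (hγ0 : 0 < γ) (hγ : γ ≤ Real.pi / 2)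
    (hx : |x| ≤ γ) : Real.cos γ * x ^ 2 ≤ x * Real.sin x := by
  have habs : x * Real.sin x = |x| * Real.sin |x| := by
    rcases abs_cases x with ⟨h, _⟩ | ⟨h, _⟩
    · rw [h]
    · rw [h, Real.sin_neg]; ring
  have hsq : x ^ 2 = |x| ^ 2 := (sq_abs x).symm
  rw [habs, hsq]
  set t := |x| with ht
  have ht0 : 0 ≤ t := abs_nonneg x
  have htγ : t ≤ γ := hx
  rcases lt_or_ge t (Real.pi / 2) with hlt | hge
  · have hcost : 0 < Real.cos t := Real.cos_pos_of_mem_Ioo ⟨by linarith [Real.pi_pos], hlt⟩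
    have htan : t ≤ Real.tan t := Real.le_tan ht0 hlt
    have h1 : t * Real.cos t ≤ Real.sin t := by
      rw [Real.tan_eq_sin_div_cos] at htan
      calc t * Real.cos t ≤ (Real.sin t / Real.cos t) * Real.cos t :=
            mul_le_mul_of_nonneg_right htan hcost.le
        _ = Real.sin t := div_mul_cancel₀ _ hcost.ne'
    have h2 : Real.cos γ ≤ Real.cos t :=
      Real.cos_le_cos_of_nonneg_of_le_pi ht0 (by linarith [Real.pi_pos]) htγ
    calc Real.cos γ * t ^ 2 ≤ Real.cos t * t ^ 2 := by nlinarith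
      _ = t * (t * Real.cos t) := by ring
      _ ≤ t * Real.sin t := mul_le_mul_of_nonneg_left h1 ht0
  · have hteq : t = Real.pi / 2 := le_antisymm (htγ.trans hγ) hge
    have hγeq : γ = Real.pi / 2 := le_antisymm hγ (hteq ▸ htγ)
    rw [hγeq, Real.cos_pi_div_two]
    have : 0 ≤ Real.sin t := Real.sin_nonneg_of_nonneg_of_le_pi ht0 (by rw [hteq]; linarith [Real.pi_pos])
    nlinarith

/-- Coercivity inequality behind the synchronization proof: on the
phase-cohesive set Δ(γ), γ ≤ π/2, one has
∑_i θ_i·∑_j a_{ij}·sin(θ_i − θ_j) ≥ (cos γ / 2)·∑_{i,j} a_{ij}·(θ_i − θ_j)². -/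
theorem kuramoto_coercivity
    (N : ℕ) (hN : 1 ≤ N)
    (γ : ℝ) (hγ0 : 0 < γ) (hγ : γ ≤ Real.pi / 2)
    (a : Fin N → Fin N → ℝ)
    (hsym : ∀ i j : Fin N, a i j = a j i)
    (ha : ∀ i j : Fin N, 0 ≤ a i j)
    (θ : Fin N → ℝ) (hθ : ∀ i j : Fin N, |θ i - θ j| ≤ γ) :
    (Real.cos γ / 2) * ∑ i : Fin N, ∑ j : Fin N, a i j * (θ i - θ j) ^ 2
      ≤ ∑ i : Fin N, θ i * ∑ j : Fin N, a i j * Real.sin (θ i - θ j) := by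
  have key : ∑ i : Fin N, ∑ j : Fin N, a i j * ((θ i - θ j) * Real.sin (θ i - θ j))
      = 2 * ∑ i : Fin N, θ i * ∑ j : Fin N, a i j * Real.sin (θ i - θ j) := by
    have h1 : ∑ i : Fin N, ∑ j : Fin N, a i j * (θ j * Real.sin (θ i - θ j))
        = -∑ i : Fin N, ∑ j : Fin N, a i j * (θ i * Real.sin (θ i - θ j)) := by
      rw [Finset.sum_comm]
      rw [← Finset.sum_neg_distrib]
      refine Finset.sum_congr rfl fun j _ => ?_
      rw [← Finset.sum_neg_distrib]
      refine Finset.sum_congr rfl fun i _ => ?_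
      rw [hsym i j]
      have : Real.sin (θ i - θ j) = -Real.sin (θ j - θ i) := by
        rw [← Real.sin_neg]; ring_nf
      rw [this]; ring
    have expand : ∀ i j : Fin N, a i j * ((θ i - θ j) * Real.sin (θ i - θ j))
        = a i j * (θ i * Real.sin (θ i - θ j)) - a i j * (θ j * Real.sin (θ i - θ j)) := by
      intro i j; ring
    have h2 : ∑ i : Fin N, ∑ j : Fin N, a i j * (θ i * Real.sin (θ i - θ j))
        = ∑ i : Fin N, θ i * ∑ j : Fin N, a i j * Real.sin (θ i - θ j) := by
      refine Finset.sum_congr rfl fun i _ => ?_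
      rw [Finset.mul_sum]
      exact Finset.sum_congr rfl fun j _ => by ring
    simp_rw [expand, Finset.sum_sub_distrib]
    rw [h1, h2]
    ring
  have hterm : ∀ i j : Fin N, Real.cos γ * (a i j * (θ i - θ j) ^ 2)
      ≤ a i j * ((θ i - θ j) * Real.sin (θ i - θ j)) := by
    intro i j
    have := xsinx_lower hγ0 hγ (hθ i j)
    calc Real.cos γ * (a i j * (θ i - θ j) ^ 2)
        = a i j * (Real.cos γ * (θ i - θ j) ^ 2) := by ring
      _ ≤ a i j * ((θ i - θ j) * Real.sin (θ i - θ j)) :=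
        mul_le_mul_of_nonneg_left this (ha i j)
  have hsum : Real.cos γ * ∑ i : Fin N, ∑ j : Fin N, a i j * (θ i - θ j) ^ 2
      ≤ ∑ i : Fin N, ∑ j : Fin N, a i j * ((θ i - θ j) * Real.sin (θ i - θ j)) := by
    rw [Finset.mul_sum]
    refine Finset.sum_le_sum fun i _ => ?_
    rw [Finset.mul_sum]
    exact Finset.sum_le_sum fun j _ => hterm i j
  rw [key] at hsum
  linarith
end

section
/- Let N ≥ 2, K > 0, and γ ∈ (0, π/2). Let a : [0,∞) → ℝ^{N×N} be a family of symmetric matrices with nonnegative entries, and let c : [0,∞) → [0,∞) be locally integrable and such that for every t ≥ 0 and every w ∈ ℝ^N with ∑_i w_i = 0, ∑_{i,j=1}^N a_{ij}(t)·(w_i − w_j)² ≥ c(t)·∑_{i=1}^N w_i². Suppose θ : [0,∞) → ℝ^N is differentiable and satisfies the homogeneous Kuramoto system dθ_i/dt = (K/N)·∑_{j=1}^N a_{ij}(t)·sin(θ_j(t) − θ_i(t)), with ∑_{i=1}^N θ_i(0) = 0 and |θ_i(0) − θ_j(0)| ≤ γ for all i, j. Then for all t ≥ 0: ∑_{i=1}^N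 θ_i(t)² ≤ (∑_{i=1}^N θ_i(0)²)·exp(−(K·cos γ / N)·∫_0^t c(s) ds). -/
/-!
The mean `∑ θᵢ` is conserved because `a` is symmetric and `sin` is odd. The spread
`max θ − min θ` cannot grow while it is below `π`: the two extreme oscillators are pulled
inwards. Hence `θ(t)` stays in `Δ(γ)`, where `y sin y ≥ cos γ · y²`, and the energy identity
`d/dt ∑ θᵢ² = -(K/N) ∑ aᵢⱼ (θᵢ - θⱼ) sin (θᵢ - θⱼ)` together with the spectral gap gives
`u' ≤ -λ c u` for `u = ∑ θᵢ²`, `λ = K cos γ / N`.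

As `c` is only integrable, Grönwall's inequality is proved by hand: monotonicity of `u` gives
`u t (1 + ∫ₛᵗ λc) ≤ u s`; chaining this over `n` intervals carrying equal mass of `λc` gives
`u t (1 + J/n)ⁿ ≤ u 0` with `J = ∫₀ᵗ λc`, and `(1 + J/n)ⁿ → exp J`.
-/

open Real MeasureTheory intervalIntegral

open Set Filter Topology Finset

section Gronwall

variable {u J : ℝ → ℝ}

lemma mul_one_add_pow_le_of_step (hu : ∀ t, 0 ≤ t → 0 ≤ u t)
    (hJ : ∀ t, 0 ≤ t → ContinuousOn J (Icc 0 t)) (hJ0 : J 0 = 0)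
    (hstep : ∀ s t, 0 ≤ s → s ≤ t → u t * (1 + (J t - J s)) ≤ u s)
    {δ : ℝ} (hδ : 0 ≤ δ) (k : ℕ) {t : ℝ} (ht : 0 ≤ t) (hJt : k * δ ≤ J t) :
    u t * (1 + δ) ^ k ≤ u 0 := by
  induction k generalizing t with
  | zero =>
    have h := hstep 0 t le_rfl ht
    rw [hJ0, sub_zero] at h
    simp only [CharP.cast_eq_zero, zero_mul] at hJt
    nlinarith [hu t ht]
  | succ k ih =>
    push_cast at hJt
    obtain ⟨s, ⟨hs0, hst⟩, hJs⟩ : ∃ s ∈ Icc 0 t, J s = k * δ :=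
      intermediate_value_Icc ht (hJ t ht) ⟨by rw [hJ0]; positivity, by linarith⟩
    calc u t * (1 + δ) ^ (k + 1) = u t * (1 + δ) * (1 + δ) ^ k := by ring
      _ ≤ u s * (1 + δ) ^ k := by
        gcongr
        calc u t * (1 + δ) ≤ u t * (1 + (J t - J s)) := by
              have := hu t ht
              gcongr
              linarith
          _ ≤ u s := hstep s t hs0 hst
      _ ≤ u 0 := ih hs0 hJs.ge

lemma le_mul_exp_neg_of_step (hu : ∀ t, 0 ≤ t → 0 ≤ u t)
    (hJ : ∀ t, 0 ≤ t → ContinuousOn J (Icc 0 t)) (hJ0 : J 0 = 0)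
    (hstep : ∀ s t, 0 ≤ s → s ≤ t → u t * (1 + (J t - J s)) ≤ u s)
    {t : ℝ} (ht : 0 ≤ t) (hJt : 0 ≤ J t) :
    u t ≤ u 0 * exp (-J t) := by
  have hlim : Tendsto (fun n : ℕ => u t * (1 + J t / n) ^ n) atTop (𝓝 (u t * exp (J t))) :=
    (tendsto_one_add_div_pow_exp (J t)).const_mul (u t)
  have hbound : u t * exp (J t) ≤ u 0 := by
    refine le_of_tendsto' hlim fun n => mul_one_add_pow_le_of_step hu hJ hJ0 hstep
      (by positivity) n ht ?_
    rcases eq_or_ne n 0 with rfl | hn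
    · simpa using hJt
    · rw [mul_div_cancel₀ _ (Nat.cast_ne_zero.2 hn)]
  rwa [exp_neg, ← div_eq_mul_inv, le_div_iff₀ (exp_pos _)]

variable {u' c : ℝ → ℝ}

lemma mul_one_add_integral_le_of_hasDerivAt (hu : ∀ t, 0 ≤ t → 0 ≤ u t)
    (hc : ∀ t, 0 ≤ t → 0 ≤ c t) (hderiv : ∀ t, 0 ≤ t → HasDerivAt u (u' t) t)
    (hle : ∀ t, 0 ≤ t → u' t ≤ -(c t * u t)) {s t : ℝ} (hs : 0 ≤ s) (hst : s ≤ t)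
    (hc_int : IntervalIntegrable c volume s t) :
    u t * (1 + ∫ r in s..t, c r) ≤ u s := by
  have hanti : AntitoneOn u (Ici 0) := by
    refine antitoneOn_of_hasDerivWithinAt_nonpos (convex_Ici 0)
      (fun r hr => (hderiv r hr).continuousAt.continuousWithinAt)
      (fun r hr => (hderiv r (interior_subset hr)).hasDerivWithinAt) fun r hr => ?_
    have hr : 0 ≤ r := interior_subset hr
    nlinarith [hle r hr, hc r hr, hu r hr]
  have h := sub_le_integral_of_hasDeriv_right_of_le (φ := fun r => -u t * c r) hst
    (fun r hr => (hderiv r (hs.trans hr.1)).continuousAt.continuousWithinAt)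
    (fun r hr => (hderiv r (hs.trans hr.1.le)).hasDerivWithinAt)
    (((intervalIntegrable_iff_integrableOn_Icc_of_le hst).1 hc_int).const_mul _)
    fun r hr => by
      have hr0 : 0 ≤ r := hs.trans hr.1.le
      have hur : u t ≤ u r := hanti hr0 (hs.trans hst) hr.2.le
      nlinarith [hle r hr0, hc r hr0]
  rw [intervalIntegral.integral_const_mul] at h
  linarith

theorem le_mul_exp_neg_integral_of_hasDerivAt (hu : ∀ t, 0 ≤ t → 0 ≤ u t)
    (hc : ∀ t, 0 ≤ t → 0 ≤ c t) (hc_int : ∀ t, 0 ≤ t → IntervalIntegrable c volume 0 t)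
    (hderiv : ∀ t, 0 ≤ t → HasDerivAt u (u' t) t) (hle : ∀ t, 0 ≤ t → u' t ≤ -(c t * u t))
    {t : ℝ} (ht : 0 ≤ t) :
    u t ≤ u 0 * exp (-∫ r in (0 : ℝ)..t, c r) := by
  refine le_mul_exp_neg_of_step (J := fun t => ∫ r in (0 : ℝ)..t, c r) hu (fun t ht => ?_)
    integral_same (fun s t hs hst => ?_) ht (integral_nonneg ht fun r hr => hc r hr.1)
  · simpa only [uIcc_of_le ht] using continuousOn_primitive_interval' (hc_int t ht) left_mem_uIcc
  · have hc_int' : IntervalIntegrable c volume s t :=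
      (hc_int s hs).symm.trans (hc_int t (hs.trans hst))
    simpa only [integral_interval_sub_left (hc_int t (hs.trans hst)) (hc_int s hs)] using
      mul_one_add_integral_le_of_hasDerivAt hu hc hderiv hle hs hst hc_int'

end Gronwall

lemma eventually_slope_sup'_lt {ι : Type*} {s : Finset ι} (hs : s.Nonempty) {f : ι → ℝ → ℝ}
    {f' : ι → ℝ} {x r : ℝ} (hf : ∀ i ∈ s, HasDerivAt (f i) (f' i) x)
    (hr : ∀ i ∈ s, f i x = s.sup' hs (fun j => f j x) → f' i < r) :
    ∀ᶠ z in 𝓝[>] x, slope (fun t => s.sup' hs fun i => f i t) x z < r := by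
  have key : ∀ i ∈ s, ∀ᶠ z in 𝓝[>] x, f i z < s.sup' hs (fun j => f j x) + r * (z - x) := by
    intro i hi
    rcases (le_sup' (fun j => f j x) hi).eq_or_lt with hmax | hlt
    · filter_upwards [(hf i hi).hasDerivWithinAt.limsup_slope_le' (lt_irrefl x) (hr i hi hmax),
        self_mem_nhdsWithin] with z hz hxz
      rw [slope_def_field, div_lt_iff₀ (sub_pos.2 hxz)] at hz
      linarith
    · exact nhdsWithin_le_nhds <| (hf i hi).continuousAt.eventually_lt (by fun_prop)
        (by rwa [sub_self, mul_zero, add_zero])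
  filter_upwards [(eventually_all_finset s).2 key, self_mem_nhdsWithin] with z hz hxz
  rw [slope_def_field, div_lt_iff₀ (sub_pos.2 hxz)]
  linarith [(sup'_lt_iff hs).2 hz]

lemma le_of_liminf_slope_right_nonpos_of_lt {f : ℝ → ℝ} {a γ C : ℝ} (hγC : γ < C)
    (hf : ∀ x, a ≤ x → ContinuousAt f x) (ha : f a ≤ γ)
    (hslope : ∀ x, a ≤ x → f x < C → ∀ r > 0, ∃ᶠ z in 𝓝[>] x, slope f x z < r)
    {x : ℝ} (hx : a ≤ x) : f x ≤ γ := by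
  -- Clipped at `C`, the function satisfies the slope bound everywhere, being constant above `C`.
  suffices min (f x) C ≤ γ from (min_le_iff.1 this).resolve_right hγC.not_ge
  refine image_le_of_liminf_slope_right_le_deriv_boundary (f := fun x => min (f x) C)
    (fun y hy => ((hf y hy.1).inf continuousAt_const).continuousWithinAt) (min_le_of_left_le ha)
    continuousOn_const (fun y _ => hasDerivWithinAt_const y _ γ) (fun y hy r hr => ?_) ⟨hx, le_rfl⟩
  rcases lt_or_ge (f y) C with hyC | hyC
  · have hev : ∀ᶠ z in 𝓝[>] y, slope (fun x => min (f x) C) y z = slope f y z := by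
      filter_upwards [nhdsWithin_le_nhds ((hf y hy.1).eventually (gt_mem_nhds hyC))] with z hz
      simp only [slope_def_field, min_eq_left hz.le, min_eq_left hyC.le]
    exact ((hslope y hy.1 hyC r hr).and_eventually hev).mono fun z hz => hz.2 ▸ hz.1
  · refine Eventually.frequently ?_
    filter_upwards [self_mem_nhdsWithin] with z hz
    rw [slope_def_field, min_eq_right hyC]
    exact (div_nonpos_of_nonpos_of_nonneg (by simp) (sub_pos.2 hz).le).trans_lt hr

lemma cos_mul_sq_le_mul_sin {γ x : ℝ} (hγ : γ < π / 2) (hx : |x| ≤ γ) :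
    cos γ * x ^ 2 ≤ x * sin x := by
  have hx_sin : x * sin x = |x| * sin |x| := by
    rcases abs_choice x with h | h <;> rw [h]
    rw [sin_neg, neg_mul_neg]
  have hcos : 0 < cos |x| := cos_pos_of_mem_Ioo ⟨by linarith [abs_nonneg x, pi_pos], by linarith⟩
  have htan : |x| * cos |x| ≤ sin |x| := by
    have := le_tan (abs_nonneg x) (by linarith)
    rwa [tan_eq_sin_div_cos, le_div_iff₀ hcos] at this
  have hmono : cos γ ≤ cos |x| :=
    cos_le_cos_of_nonneg_of_le_pi (abs_nonneg x) (by linarith [pi_pos]) hx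
  rw [hx_sin, ← sq_abs]
  nlinarith [abs_nonneg x, sq_nonneg |x|]

lemma sum_sum_eq_zero_of_antisymm {ι : Type*} [Fintype ι] {g : ι → ι → ℝ}
    (hg : ∀ i j, g j i = -g i j) : ∑ i, ∑ j, g i j = 0 := by
  have h : ∑ i, ∑ j, g i j = -∑ i, ∑ j, g i j :=
    calc ∑ i, ∑ j, g i j = ∑ j, ∑ i, g i j := sum_comm
      _ = ∑ j, ∑ i, -g j i := sum_congr rfl fun j _ => sum_congr rfl fun i _ => hg j i
      _ = -∑ j, ∑ i, g j i := by simp only [sum_neg_distrib]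
  linarith

section Spread

variable {ι : Type*} [Fintype ι] [Nonempty ι]

noncomputable def spread (x : ι → ℝ) : ℝ :=
  univ.sup' univ_nonempty fun p : ι × ι => x p.1 - x p.2

lemma sub_le_spread (x : ι → ℝ) (i j : ι) : x i - x j ≤ spread x :=
  le_sup' (fun p : ι × ι => x p.1 - x p.2) (mem_univ (i, j))

lemma abs_sub_le_spread (x : ι → ℝ) (i j : ι) : |x i - x j| ≤ spread x :=
  abs_sub_le_iff.2 ⟨sub_le_spread x i j, sub_le_spread x j i⟩

lemma spread_le_iff {x : ι → ℝ} {γ : ℝ} : spread x ≤ γ ↔ ∀ i j, x i - x j ≤ γ := by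
  simp [spread, Finset.sup'_le_iff]

end Spread

section Kuramoto

variable {ι : Type*} [Fintype ι]

noncomputable def kuramotoField (κ : ℝ) (A : ι → ι → ℝ) (x : ι → ℝ) (i : ι) : ℝ :=
  κ * ∑ j, A i j * sin (x j - x i)

def IsKuramotoSolution (κ : ℝ) (a : ℝ → ι → ι → ℝ) (θ : ℝ → ι → ℝ) : Prop :=
  ∀ t, 0 ≤ t → ∀ i, HasDerivAt (fun s => θ s i) (kuramotoField κ (a t) (θ t) i) t

variable {κ : ℝ} {A : ι → ι → ℝ}

lemma sum_kuramotoField_eq_zero (hA : ∀ i j, A i j = A j i) (x : ι → ℝ) :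
    ∑ i, kuramotoField κ A x i = 0 := by
  simp only [kuramotoField, ← mul_sum]
  rw [sum_sum_eq_zero_of_antisymm, mul_zero]
  intro i j
  rw [hA j i, ← neg_sub (x j) (x i), sin_neg, mul_neg]

lemma two_mul_sum_mul_kuramotoField (hA : ∀ i j, A i j = A j i) (x : ι → ℝ) :
    2 * ∑ i, x i * kuramotoField κ A x i
      = -κ * ∑ i, ∑ j, A i j * ((x i - x j) * sin (x i - x j)) := by
  have h := sum_sum_eq_zero_of_antisymm (g := fun i j => A i j * (x i + x j) * sin (x j - x i))
    fun i j => by rw [hA j i, ← neg_sub (x j) (x i), sin_neg]; ring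
  rw [← sub_eq_zero, ← mul_zero κ, ← h]
  simp only [kuramotoField, mul_sum, ← sum_sub_distrib]
  refine sum_congr rfl fun i _ => sum_congr rfl fun j _ => ?_
  rw [← neg_sub (x i) (x j), sin_neg]
  ring

lemma kuramotoField_nonpos_of_isMax (hκ : 0 ≤ κ) (hA : ∀ j, 0 ≤ A i j) {x : ι → ℝ}
    (hmax : ∀ j, x j ≤ x i) (hπ : ∀ j, x i - x j ≤ π) : kuramotoField κ A x i ≤ 0 :=
  mul_nonpos_of_nonneg_of_nonpos hκ <| sum_nonpos fun j _ => mul_nonpos_of_nonneg_of_nonpos (hA j)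
    (sin_nonpos_of_nonpos_of_neg_pi_le (by linarith [hmax j]) (by linarith [hπ j]))

lemma kuramotoField_nonneg_of_isMin (hκ : 0 ≤ κ) (hA : ∀ j, 0 ≤ A i j) {x : ι → ℝ}
    (hmin : ∀ j, x i ≤ x j) (hπ : ∀ j, x j - x i ≤ π) : 0 ≤ kuramotoField κ A x i :=
  mul_nonneg hκ <| sum_nonneg fun j _ => mul_nonneg (hA j)
    (sin_nonneg_of_nonneg_of_le_pi (by linarith [hmin j]) (hπ j))

lemma kuramotoField_sub_nonpos_of_spread [Nonempty ι] (hκ : 0 ≤ κ) (hA : ∀ i j, 0 ≤ A i j)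
    {x : ι → ℝ} (hπ : spread x ≤ π) {i j : ι} (hij : x i - x j = spread x) :
    kuramotoField κ A x i - kuramotoField κ A x j ≤ 0 := by
  have hmax : ∀ k, x k ≤ x i := fun k => by linarith [sub_le_spread x k j]
  have hmin : ∀ k, x j ≤ x k := fun k => by linarith [sub_le_spread x i k]
  have hπ' : ∀ k l, x k - x l ≤ π := fun k l => (sub_le_spread x k l).trans hπ
  linarith [kuramotoField_nonpos_of_isMax hκ (hA i) hmax (hπ' i),
    kuramotoField_nonneg_of_isMin hκ (hA j) hmin (hπ' · j)]

lemma two_mul_sum_mul_kuramotoField_le (hκ : 0 ≤ κ) (hA_symm : ∀ i j, A i j = A j i)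
    (hA : ∀ i j, 0 ≤ A i j) {γ : ℝ} (hγ : γ < π / 2) {x : ι → ℝ} (hx : ∀ i j, |x i - x j| ≤ γ) :
    2 * ∑ i, x i * kuramotoField κ A x i ≤ -(κ * cos γ) * ∑ i, ∑ j, A i j * (x i - x j) ^ 2 := by
  rw [two_mul_sum_mul_kuramotoField hA_symm, neg_mul, neg_mul, neg_le_neg_iff, mul_assoc, mul_sum]
  refine mul_le_mul_of_nonneg_left (sum_le_sum fun i _ => ?_) hκ
  rw [mul_sum]
  refine sum_le_sum fun j _ => ?_
  rw [mul_left_comm]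
  exact mul_le_mul_of_nonneg_left (cos_mul_sq_le_mul_sin hγ (hx i j)) (hA i j)

variable {a : ℝ → ι → ι → ℝ} {θ : ℝ → ι → ℝ}

lemma IsKuramotoSolution.sum_eq (hθ : IsKuramotoSolution κ a θ)
    (ha : ∀ t, 0 ≤ t → ∀ i j, a t i j = a t j i) {t : ℝ} (ht : 0 ≤ t) :
    ∑ i, θ t i = ∑ i, θ 0 i := by
  have hderiv : ∀ s, 0 ≤ s → HasDerivAt (fun s => ∑ i, θ s i) 0 s := fun s hs => by
    have h := HasDerivAt.fun_sum (u := univ) fun i _ => hθ s hs i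
    rwa [sum_kuramotoField_eq_zero (ha s hs)] at h
  exact constant_of_has_deriv_right_zero
    (fun s hs => (hderiv s hs.1).continuousAt.continuousWithinAt)
    (fun s hs => (hderiv s hs.1).hasDerivWithinAt) t ⟨ht, le_rfl⟩

lemma IsKuramotoSolution.spread_le [Nonempty ι] (hθ : IsKuramotoSolution κ a θ) (hκ : 0 ≤ κ)
    (ha : ∀ t, 0 ≤ t → ∀ i j, 0 ≤ a t i j) {γ : ℝ} (hγ : γ < π) (h0 : spread (θ 0) ≤ γ)
    {t : ℝ} (ht : 0 ≤ t) : spread (θ t) ≤ γ := by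
  have hpair : ∀ s, 0 ≤ s → ∀ p : ι × ι, HasDerivAt (fun s => θ s p.1 - θ s p.2)
      (kuramotoField κ (a s) (θ s) p.1 - kuramotoField κ (a s) (θ s) p.2) s :=
    fun s hs p => (hθ s hs p.1).sub (hθ s hs p.2)
  refine le_of_liminf_slope_right_nonpos_of_lt (f := fun s => spread (θ s)) hγ
    (fun s hs => ContinuousAt.finset_sup'_apply _ fun p _ => (hpair s hs p).continuousAt) h0
    (fun s hs hsπ r hr => ?_) ht
  exact (eventually_slope_sup'_lt univ_nonempty (fun p _ => hpair s hs p) fun p _ hp =>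
    (kuramotoField_sub_nonpos_of_spread hκ (ha s hs) hsπ.le hp).trans_lt hr).frequently

lemma hasDerivAt_sum_sq {f : ι → ℝ → ℝ} {f' : ι → ℝ} {t : ℝ}
    (hf : ∀ i, HasDerivAt (f i) (f' i) t) :
    HasDerivAt (fun s => ∑ i, f i s ^ 2) (2 * ∑ i, f i t * f' i) t := by
  refine (HasDerivAt.fun_sum (u := univ) fun i _ => (hf i).fun_pow 2).congr_deriv ?_
  rw [mul_sum]
  refine sum_congr rfl fun i _ => ?_
  simp only [Nat.cast_ofNat]
  ring

end Kuramoto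

/-- Deterministic exponential-decay estimate for the homogeneous Kuramoto
system started in the phase-cohesive set Δ(γ), γ < π/2, with mean zero,
given a time-dependent spectral gap c(t) for the network. -/
theorem kuramoto_exponential_decay
    (N : ℕ) (hN : 2 ≤ N) (K : ℝ) (hK : 0 < K)
    (γ : ℝ) (hγ0 : 0 < γ) (hγ : γ < Real.pi / 2)
    (a : ℝ → Fin N → Fin N → ℝ)
    (hsym : ∀ t : ℝ, 0 ≤ t → ∀ i j : Fin N, a t i j = a t j i)
    (ha : ∀ t : ℝ, 0 ≤ t → ∀ i j : Fin N, 0 ≤ a t i j)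
    (c : ℝ → ℝ)
    (hc0 : ∀ t : ℝ, 0 ≤ t → 0 ≤ c t)
    (hcInt : ∀ t : ℝ, 0 ≤ t → IntervalIntegrable c volume 0 t)
    (hgap : ∀ t : ℝ, 0 ≤ t → ∀ w : Fin N → ℝ, (∑ i : Fin N, w i) = 0 →
      c t * ∑ i : Fin N, (w i) ^ 2
        ≤ ∑ i : Fin N, ∑ j : Fin N, a t i j * (w i - w j) ^ 2)
    (θ : ℝ → Fin N → ℝ)
    (hode : ∀ t : ℝ, 0 ≤ t → ∀ i : Fin N,
      HasDerivAt (fun s => θ s i)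
        ((K / N) * ∑ j : Fin N, a t i j * Real.sin (θ t j - θ t i)) t)
    (hmean0 : ∑ i : Fin N, θ 0 i = 0)
    (hinit : ∀ i j : Fin N, |θ 0 i - θ 0 j| ≤ γ) :
    ∀ t : ℝ, 0 ≤ t →
      ∑ i : Fin N, (θ t i) ^ 2
        ≤ (∑ i : Fin N, (θ 0 i) ^ 2)
            * Real.exp (-(K * Real.cos γ / N) * ∫ s in (0:ℝ)..t, c s) := by
  intro t ht
  have : Nonempty (Fin N) := ⟨⟨0, by omega⟩⟩
  have hθ : IsKuramotoSolution (K / N) a θ := hode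
  have hκ : 0 ≤ K / N := by positivity
  have hcos : 0 < cos γ := cos_pos_of_mem_Ioo ⟨by linarith [pi_pos], hγ⟩
  have hrate : 0 ≤ K * cos γ / N := by positivity
  have hmean : ∀ s, 0 ≤ s → ∑ i, θ s i = 0 := fun s hs => (hθ.sum_eq hsym hs).trans hmean0
  have hcoh : ∀ s, 0 ≤ s → ∀ i j, |θ s i - θ s j| ≤ γ := fun s hs i j =>
    (abs_sub_le_spread _ i j).trans <| hθ.spread_le hκ ha (by linarith [pi_pos])
      (spread_le_iff.2 fun i j => (le_abs_self _).trans (hinit i j)) hs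
  have henergy : ∀ s, 0 ≤ s → 2 * ∑ i, θ s i * kuramotoField (K / N) (a s) (θ s) i
      ≤ -(K * cos γ / N * c s * ∑ i, θ s i ^ 2) := fun s hs =>
    calc 2 * ∑ i, θ s i * kuramotoField (K / N) (a s) (θ s) i
        ≤ -(K / N * cos γ) * ∑ i, ∑ j, a s i j * (θ s i - θ s j) ^ 2 :=
          two_mul_sum_mul_kuramotoField_le hκ (hsym s hs) (ha s hs) hγ (hcoh s hs)
      _ ≤ -(K / N * cos γ) * (c s * ∑ i, θ s i ^ 2) :=
          mul_le_mul_of_nonpos_left (hgap s hs _ (hmean s hs))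
            (neg_nonpos.2 (mul_nonneg hκ hcos.le))
      _ = -(K * cos γ / N * c s * ∑ i, θ s i ^ 2) := by ring
  have hdecay := le_mul_exp_neg_integral_of_hasDerivAt (u := fun s => ∑ i, θ s i ^ 2)
    (c := fun s => K * cos γ / N * c s) (fun s _ => by positivity)
    (fun s hs => mul_nonneg hrate (hc0 s hs)) (fun s hs => (hcInt s hs).const_mul _)
    (fun s hs => hasDerivAt_sum_sq (hθ s hs)) henergy ht
  rwa [intervalIntegral.integral_const_mul, ← neg_mul] at hdecay
end

section
/- Let V be a finite nonempty set and π : V × V → ℝ a symmetric function with π(u,v) ≥ 0 for all u, v, with π(u,u) > 0 for every u ∈ V, and such that there exist u* ≠ v* in V with π(u*, v*) = 0 (the graph is not complete). Let N ≥ 2 and θ ∈ ℝ^N. Then the following are equivalent: (i) for every x = (x_1,…,x_N) ∈ V^N and every i ∈ {1,…,N}, ∑_{j=1}^N π(x_i, x_j)·sin(θ_j − θ_i) = 0; (ii) sin(θ_j − θ_i) = 0 for all i, j ∈ {1,…,N} (i.e. every pairwise phase difference is an integer multiple of π). -/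
open Real

/-- Characterization of equilibria for the Kuramoto random walk model
(Proposition 1.2(b), homogeneous case): on a non-complete skeleton with
self-loops, θ is an equilibrium of the drift simultaneously for all walker
positions iff all pairwise phase differences are integer multiples of π. -/
theorem krw_equilibria_characterization
    (V : Type*) [Fintype V] [Nonempty V]
    (p : V → V → ℝ)
    (hsym : ∀ u v : V, p u v = p v u)
    (hnonneg : ∀ u v : V, 0 ≤ p u v)
    (hloop : ∀ u : V, 0 < p u u)
    (hnotcomplete : ∃ us vs : V, us ≠ vs ∧ p us vs = 0)
    (N : ℕ) (hN : 2 ≤ N) (θ : Fin N → ℝ) :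
    (∀ x : Fin N → V, ∀ i : Fin N,
        ∑ j : Fin N, p (x i) (x j) * Real.sin (θ j - θ i) = 0)
      ↔ (∀ i j : Fin N, Real.sin (θ j - θ i) = 0) := by
  obtain ⟨us, vs, hne, hzero⟩ := hnotcomplete
  constructor
  · intro h i j
    by_cases hij : i = j
    · simp [hij]
    · set x : Fin N → V := fun k => if k = i ∨ k = j then us else vs with hx
      have hxi : x i = us := by simp [hx]
      have hxj : x j = us := by simp [hx]
      have hsum := h x i
      have hkey : ∑ k : Fin N, p (x i) (x k) * Real.sin (θ k - θ i)
          = p us us * Real.sin (θ j - θ i) := by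
        rw [Finset.sum_eq_single j]
        · rw [hxi, hxj]
        · intro k _ hk
          by_cases hki : k = i
          · simp [hki]
          · have hxk : x k = vs := by simp [hx, hki, hk]
            rw [hxi, hxk, hzero, zero_mul]
        · intro hj; exact absurd (Finset.mem_univ j) hj
      rw [hkey] at hsum
      exact (mul_eq_zero.mp hsum).resolve_left (ne_of_gt (hloop us))
  · intro h x i
    simp [h]
end

section
/- Let V be a finite set and π : V × V → ℝ a symmetric function with π(u,v) ≥ 0 for all u, v. Let G be the simple graph on V in which u and v are adjacent if and only if u ≠ v and π(u,v) > 0, and assume G is connected. Let θ ∈ ℝ^V. Then the following are equivalent: (i) for every symmetric subset E' ⊆ V × V and every u ∈ V, ∑_{v ∈ V} 1{(u,v) ∈ E'}·π(u,v)·sin(θ_v − θ_u) = 0; (ii) sin(θ_v − θ_u) = 0 for all u, v ∈ V (i.e. every pairwise phase difference is an integer multiple of π). -/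
open Real

/-- Characterization of equilibria for the Kuramoto model on the dynamic
random conductance model (Proposition 1.2(b), homogeneous case): on a
connected skeleton, θ is an equilibrium of the drift simultaneously for all
edge subsets iff all pairwise phase differences are integer multiples of π. -/
theorem drc_equilibria_characterization
    (V : Type*) [Fintype V] [DecidableEq V]
    (p : V → V → ℝ)
    (hsym : ∀ u v : V, p u v = p v u)
    (hnonneg : ∀ u v : V, 0 ≤ p u v)
    (G : SimpleGraph V)
    (hG : ∀ u v : V, G.Adj u v ↔ u ≠ v ∧ 0 < p u v)
    (hconn : G.Connected)
    (θ : V → ℝ) :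
    (∀ E' : Finset (V × V),
        (∀ u v : V, (u, v) ∈ E' → (v, u) ∈ E') →
        ∀ u : V,
          ∑ v : V, (if (u, v) ∈ E' then (1:ℝ) else 0) * p u v * Real.sin (θ v - θ u) = 0)
      ↔ (∀ u v : V, Real.sin (θ v - θ u) = 0) := by
  constructor
  · intro h
    -- First: sin vanishes along edges
    have hedge : ∀ a b : V, G.Adj a b → Real.sin (θ b - θ a) = 0 := by
      intro a b hab
      obtain ⟨hne, hpos⟩ := (hG a b).mp hab
      have hsum := h {(a, b), (b, a)} (by
        intro u v huv
        simp only [Finset.mem_insert, Finset.mem_singleton, Prod.mk.injEq] at huv ⊢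
        tauto) a
      have hmem : ∀ v : V, ((a, v) ∈ ({(a, b), (b, a)} : Finset (V × V))) ↔ v = b := by
        intro v
        simp only [Finset.mem_insert, Finset.mem_singleton, Prod.mk.injEq]
        constructor
        · rintro (⟨_, rfl⟩ | ⟨rfl, rfl⟩)
          · rfl
          · exact absurd rfl hne
        · rintro rfl; simp
      rw [Finset.sum_eq_single b] at hsum
      · rw [if_pos ((hmem b).mpr rfl), one_mul] at hsum
        exact (mul_eq_zero.mp hsum).resolve_left (ne_of_gt hpos)
      · intro v _ hv
        rw [if_neg (fun hc => hv ((hmem v).mp hc)), zero_mul, zero_mul]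
      · intro hb; exact absurd (Finset.mem_univ b) hb
    -- Propagate along the connected graph
    intro u v
    obtain ⟨w⟩ := hconn u v
    have key : ∀ {a b : V}, G.Walk a b → ∃ n : ℤ, θ b - θ a = n * Real.pi := by
      intro a b w
      induction w with
      | nil => exact ⟨0, by simp⟩
      | cons hadj _ ih =>
        obtain ⟨n, hn⟩ := ih
        obtain ⟨m, hm⟩ := Real.sin_eq_zero_iff.mp (hedge _ _ hadj)
        exact ⟨n + m, by push_cast; rw [add_mul]; linarith⟩
    obtain ⟨n, hn⟩ := key w
    rw [hn]
    exact Real.sin_int_mul_pi n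
  · intro h E' _ u
    apply Finset.sum_eq_zero
    intro v _
    rw [h u v, mul_zero]
end

section
/- Let N ≥ 1 and let a ∈ ℝ^{N×N} be symmetric with nonnegative entries. Let θ* ∈ ℝ^N satisfy θ*_i ∈ {0, π} for every i, and define v ∈ ℝ^N by v_i = 1 if θ*_i = 0 and v_i = −1 if θ*_i = π. Let H(θ*, a) ∈ ℝ^{N×N} be the matrix with entries H_{ij} = −a_{ij}·cos(θ*_j − θ*_i) for i ≠ j and H_{ii} = ∑_{k≠i} a_{ik}·cos(θ*_k − θ*_i). Then ∑_{i,j=1}^N v_i·H_{ij}·v_j = −2·∑_{i,j=1}^N a_{ij}·1{θ*_i ≠ θ*_j}. In particular, if there exist i, j with a_{ij} > 0 and θ*_i ≠ θ*_j, then v is an unstable direction: v^T·H(θ*, a)·v < 0. -/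
open Real Finset

/-- Instability computation at a non-synchronized fixed point: at a fixed
point θ* with phases in {0, π}, the Hessian quadratic form in the direction
v (with v_i = ±1 according to θ*_i) equals −2·∑_{i,j} a_{ij}·1{θ*_i ≠ θ*_j};
in particular, if some edge joins phases 0 and π, then v is an unstable
direction. -/
theorem kuramoto_hessian_unstable_direction
    (N : ℕ) (hN : 1 ≤ N)
    (a : Fin N → Fin N → ℝ)
    (hsym : ∀ i j : Fin N, a i j = a j i)
    (ha : ∀ i j : Fin N, 0 ≤ a i j)
    (θs : Fin N → ℝ)
    (hθs : ∀ i : Fin N, θs i = 0 ∨ θs i = Real.pi)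
    (v : Fin N → ℝ)
    (hv0 : ∀ i : Fin N, θs i = 0 → v i = 1)
    (hvπ : ∀ i : Fin N, θs i = Real.pi → v i = -1)
    (H : Fin N → Fin N → ℝ)
    (hHoff : ∀ i j : Fin N, i ≠ j → H i j = -(a i j * Real.cos (θs j - θs i)))
    (hHdiag : ∀ i : Fin N,
      H i i = ∑ k ∈ Finset.univ.erase i, a i k * Real.cos (θs k - θs i)) :
    (∑ i : Fin N, ∑ j : Fin N, v i * H i j * v j
        = -2 * ∑ i : Fin N, ∑ j : Fin N,
            a i j * (if θs i ≠ θs j then (1:ℝ) else 0))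
    ∧ ((∃ i j : Fin N, 0 < a i j ∧ θs i ≠ θs j) →
        ∑ i : Fin N, ∑ j : Fin N, v i * H i j * v j < 0) := by
  have hpi : Real.pi ≠ 0 := Real.pi_ne_zero
  have hcos : ∀ i j : Fin N, Real.cos (θs j - θs i) = v i * v j := by
    intro i j
    rcases hθs i with hi | hi <;> rcases hθs j with hj | hj <;>
      simp [hi, hj, hv0 i, hvπ i, hv0 j, hvπ j, Real.cos_pi]
  have hsq : ∀ i : Fin N, v i * v i = 1 := by
    intro i
    rcases hθs i with hi | hi
    · rw [hv0 i hi]; ring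
    · rw [hvπ i hi]; ring
  have hfac : ∀ i j : Fin N,
      a i j * (v i * v j) - a i j
        = -2 * (a i j * (if θs i ≠ θs j then (1:ℝ) else 0)) := by
    intro i j
    by_cases h : θs i = θs j
    · have hvv : v i = v j := by
        rcases hθs i with hi | hi
        · rw [hv0 i hi, hv0 j (h ▸ hi)]
        · rw [hvπ i hi, hvπ j (h ▸ hi)]
      have : v i * v j = 1 := by rw [← hvv]; exact hsq i
      simp [h, this]
    · have hvv : v i * v j = -1 := by
        rcases hθs i with hi | hi <;> rcases hθs j with hj | hj
        · exact absurd (hi.trans hj.symm) h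
        · rw [hv0 i hi, hvπ j hj]; ring
        · rw [hvπ i hi, hv0 j hj]; ring
        · exact absurd (hi.trans hj.symm) h
      rw [hvv]; simp [h]; ring
  -- main identity
  have key : ∑ i : Fin N, ∑ j : Fin N, v i * H i j * v j
      = -2 * ∑ i : Fin N, ∑ j : Fin N,
          a i j * (if θs i ≠ θs j then (1:ℝ) else 0) := by
    rw [Finset.mul_sum]
    refine Finset.sum_congr rfl fun i _ => ?_
    have hmem : i ∈ (Finset.univ : Finset (Fin N)) := Finset.mem_univ i
    rw [← Finset.sum_erase_add _ _ hmem, ← Finset.sum_erase_add _ _ hmem]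
    have hdiag : v i * H i i * v i
        = ∑ k ∈ Finset.univ.erase i, a i k * (v i * v k) := by
      rw [hHdiag i]
      have : ∀ k, Real.cos (θs k - θs i) = v i * v k := fun k => hcos i k
      rw [Finset.sum_congr rfl fun k _ => by rw [this k]]
      have h1 : v i * (∑ k ∈ Finset.univ.erase i, a i k * (v i * v k)) * v i
          = (v i * v i) * ∑ k ∈ Finset.univ.erase i, a i k * (v i * v k) := by
        ring
      rw [h1, hsq i, one_mul]
    have hoffs : ∀ j ∈ Finset.univ.erase i, v i * H i j * v j = -(a i j) := by
      intro j hj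
      have hne : i ≠ j := fun h => (Finset.mem_erase.mp hj).1 h.symm
      rw [hHoff i j hne, hcos i j]
      have : v i * -(a i j * (v i * v j)) * v j
          = -((v i * v i) * (v j * v j) * a i j) := by ring
      rw [this, hsq i, hsq j]; ring
    rw [hdiag, Finset.sum_congr rfl hoffs]
    have hself : a i i * (if θs i ≠ θs i then (1:ℝ) else 0) = 0 := by simp
    rw [hself, add_zero, Finset.mul_sum, ← Finset.sum_add_distrib]
    refine Finset.sum_congr rfl fun j _ => ?_
    have := hfac i j
    linarith [hfac i j]
  refine ⟨key, ?_⟩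
  rintro ⟨i0, j0, hapos, hne⟩
  rw [key]
  have hS : 0 < ∑ i : Fin N, ∑ j : Fin N,
      a i j * (if θs i ≠ θs j then (1:ℝ) else 0) := by
    have hnn : ∀ i j : Fin N,
        0 ≤ a i j * (if θs i ≠ θs j then (1:ℝ) else 0) := by
      intro i j
      by_cases h : θs i ≠ θs j <;> simp [h, ha i j]
    refine Finset.sum_pos' (fun i _ => Finset.sum_nonneg fun j _ => hnn i j)
      ⟨i0, Finset.mem_univ i0, ?_⟩
    refine Finset.sum_pos' (fun j _ => hnn i0 j) ⟨j0, Finset.mem_univ j0, ?_⟩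
    simp [hne, hapos]
  linarith
end
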